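/- Let Z be a nonnegative random variable and C⋆ ∈ (0,∞). Suppose E(1 − e^{−λZ}) = (C⋆ + o(1)) λ log(1/λ) as λ ↓ 0. Then E(Z e^{−λZ}) = (C⋆ + o(1)) log(1/λ) as λ ↓ 0. -/

import Mathlib

open MeasureTheory Filter Real Topology

/-!
Write `F λ = E(1 - e^{-λZ})` and `G λ = E(Z e^{-λZ})`. Since `F` is concave with derivative `G`,
for `0 < s ≤ t` we have `(t - s) G t ≤ F t - F s ≤ (t - s) G s`. Taking `(s, t) = (λ/2, λ)`
and `(λ, 2λ)` sandwiches `G λ / log(1/λ)` between difference quotients of `F`; as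
`log(1/(cλ)) ~ log(1/λ)`, the hypothesis gives `F (cλ) ~ c C⋆ λ log(1/λ)` for each fixed `c > 0`,
so both bounds tend to `C⋆`.
-/

lemma sub_mul_exp_neg_le_exp_neg_sub_exp_neg (a b : ℝ) :
    (b - a) * exp (-b) ≤ exp (-a) - exp (-b) := by
  have h := add_one_le_exp (b - a)
  have he : exp (-a) = exp (b - a) * exp (-b) := by rw [← exp_add]; ring_nf
  nlinarith [exp_pos (-b)]

lemma exp_neg_sub_exp_neg_le_sub_mul_exp_neg (a b : ℝ) :
    exp (-a) - exp (-b) ≤ (b - a) * exp (-a) := by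
  have h := add_one_le_exp (a - b)
  have he : exp (-b) = exp (a - b) * exp (-a) := by rw [← exp_add]; ring_nf
  nlinarith [exp_pos (-a)]

lemma tendsto_log_one_div_nhdsGT_zero : Tendsto (fun l : ℝ => log (1 / l)) (𝓝[>] 0) atTop := by
  simp only [one_div, log_inv]
  exact tendsto_neg_atBot_atTop.comp tendsto_log_nhdsGT_zero

lemma tendsto_log_one_div_const_mul_div_log_one_div {c : ℝ} (hc : 0 < c) :
    Tendsto (fun l : ℝ => log (1 / (c * l)) / log (1 / l)) (𝓝[>] 0) (𝓝 1) := by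
  have hlim : Tendsto (fun l : ℝ => log (1 / c) / log (1 / l) + 1) (𝓝[>] 0) (𝓝 (0 + 1)) :=
    (tendsto_const_nhds.div_atTop tendsto_log_one_div_nhdsGT_zero).add tendsto_const_nhds
  rw [zero_add] at hlim
  refine hlim.congr' ?_
  filter_upwards [self_mem_nhdsWithin,
    tendsto_log_one_div_nhdsGT_zero.eventually_ne_atTop 0] with l (hl : 0 < l) hL
  rw [← one_div_mul_one_div, log_mul (by positivity) (by positivity), add_div, div_self hL]

lemma tendsto_comp_const_mul_div_mul_log_one_div {F : ℝ → ℝ} {C c : ℝ} (hc : 0 < c)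
    (hF : Tendsto (fun l => F l / (l * log (1 / l))) (𝓝[>] 0) (𝓝 C)) :
    Tendsto (fun l => F (c * l) / (l * log (1 / l))) (𝓝[>] 0) (𝓝 (c * C)) := by
  have hscale : Tendsto (fun l : ℝ => c * l) (𝓝[>] 0) (𝓝[>] 0) := by
    simpa using TendstoNhdsWithinIoi.const_mul hc (tendsto_id (x := 𝓝[>] (0 : ℝ)))
  have hprod := (hF.comp hscale).mul
    ((tendsto_log_one_div_const_mul_div_log_one_div hc).const_mul c)
  rw [mul_one, mul_comm] at hprod
  refine hprod.congr' ?_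
  filter_upwards [self_mem_nhdsWithin,
    tendsto_log_one_div_nhdsGT_zero.eventually_ne_atTop 0,
    hscale.eventually (tendsto_log_one_div_nhdsGT_zero.eventually_ne_atTop 0)]
    with l (hl : 0 < l) hL hcL
  simp only [Function.comp_apply]
  field_simp

theorem tendsto_div_log_one_div_of_increment_bounds {F G : ℝ → ℝ} {C : ℝ}
    (hF : Tendsto (fun l => F l / (l * log (1 / l))) (𝓝[>] 0) (𝓝 C))
    (hFG : ∀ s t, 0 < s → s ≤ t → (t - s) * G t ≤ F t - F s ∧ F t - F s ≤ (t - s) * G s) :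
    Tendsto (fun l => G l / log (1 / l)) (𝓝[>] 0) (𝓝 C) := by
  have hlower := (tendsto_comp_const_mul_div_mul_log_one_div two_pos hF).sub hF
  have hupper := (hF.const_mul 2).sub
    ((tendsto_comp_const_mul_div_mul_log_one_div (c := 1 / 2) (by norm_num) hF).const_mul 2)
  rw [show 2 * C - C = C by ring] at hlower
  rw [show 2 * C - 2 * (1 / 2 * C) = C by ring] at hupper
  refine tendsto_of_tendsto_of_tendsto_of_le_of_le' hlower hupper ?_ ?_
  · filter_upwards [self_mem_nhdsWithin,
      tendsto_log_one_div_nhdsGT_zero.eventually_gt_atTop 0] with l (hl : 0 < l) hL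
    have hinc := (hFG l (2 * l) hl (by linarith)).2
    calc F (2 * l) / (l * log (1 / l)) - F l / (l * log (1 / l))
        = (F (2 * l) - F l) / (l * log (1 / l)) := by ring
      _ ≤ (l * G l) / (l * log (1 / l)) := by gcongr; linarith
      _ = G l / log (1 / l) := mul_div_mul_left _ _ hl.ne'
  · filter_upwards [self_mem_nhdsWithin,
      tendsto_log_one_div_nhdsGT_zero.eventually_gt_atTop 0] with l (hl : 0 < l) hL
    have hinc := (hFG (1 / 2 * l) l (by positivity) (by linarith)).1
    calc G l / log (1 / l) = 2 * ((l - 1 / 2 * l) * G l) / (l * log (1 / l)) := by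
          field_simp; ring
      _ ≤ 2 * (F l - F (1 / 2 * l)) / (l * log (1 / l)) := by gcongr
      _ = 2 * (F l / (l * log (1 / l))) - 2 * (F (1 / 2 * l) / (l * log (1 / l))) := by ring

section Laplace

variable {Ω : Type*} [MeasurableSpace Ω] {P : Measure Ω} [IsFiniteMeasure P] {Z : Ω → ℝ}

lemma integrable_exp_neg_mul (hZ : Measurable Z) (hZ0 : ∀ ω, 0 ≤ Z ω) {l : ℝ} (hl : 0 ≤ l) :
    Integrable (fun ω => exp (-l * Z ω)) P := by
  refine (integrable_const (1 : ℝ)).mono' (hZ.const_mul (-l)).exp.aestronglyMeasurable ?_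
  filter_upwards with ω
  rw [norm_of_nonneg (exp_pos _).le, exp_le_one_iff]
  nlinarith [hZ0 ω]

lemma integrable_mul_exp_neg_mul (hZ : Measurable Z) (hZ0 : ∀ ω, 0 ≤ Z ω) {l : ℝ} (hl : 0 < l) :
    Integrable (fun ω => Z ω * exp (-l * Z ω)) P := by
  refine (integrable_const (exp (-1) / l)).mono'
    (hZ.mul (hZ.const_mul (-l)).exp).aestronglyMeasurable ?_
  filter_upwards with ω
  rw [norm_of_nonneg (mul_nonneg (hZ0 ω) (exp_pos _).le), le_div_iff₀ hl]
  have h := mul_exp_neg_le_exp_neg_one (l * Z ω)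
  rw [← neg_mul] at h
  linarith

lemma laplace_increment_bounds (hZ : Measurable Z) (hZ0 : ∀ ω, 0 ≤ Z ω) {s t : ℝ}
    (hs : 0 < s) (ht : 0 < t) :
    (t - s) * ∫ ω, Z ω * exp (-t * Z ω) ∂P ≤
        (∫ ω, (1 - exp (-t * Z ω)) ∂P) - ∫ ω, (1 - exp (-s * Z ω)) ∂P ∧
      (∫ ω, (1 - exp (-t * Z ω)) ∂P) - ∫ ω, (1 - exp (-s * Z ω)) ∂P ≤
        (t - s) * ∫ ω, Z ω * exp (-s * Z ω) ∂P := by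
  have hexp {l : ℝ} (hl : 0 < l) : Integrable (fun ω => 1 - exp (-l * Z ω)) P :=
    (integrable_const 1).sub (integrable_exp_neg_mul hZ hZ0 hl.le)
  have hmul {l : ℝ} (hl : 0 < l) : Integrable (fun ω => (t - s) * (Z ω * exp (-l * Z ω))) P :=
    (integrable_mul_exp_neg_mul hZ hZ0 hl).const_mul _
  rw [← integral_const_mul, ← integral_const_mul, ← integral_sub (hexp ht) (hexp hs)]
  constructor
  · refine integral_mono (hmul ht) ((hexp ht).sub (hexp hs)) fun ω => ?_
    have h := sub_mul_exp_neg_le_exp_neg_sub_exp_neg (s * Z ω) (t * Z ω)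
    simp only [neg_mul] at h ⊢
    linarith
  · refine integral_mono ((hexp ht).sub (hexp hs)) (hmul hs) fun ω => ?_
    have h := exp_neg_sub_exp_neg_le_sub_mul_exp_neg (s * Z ω) (t * Z ω)
    simp only [neg_mul] at h ⊢
    linarith

end Laplace

theorem laplace_asymptotics_derivative_general
    {Ω : Type*} [MeasurableSpace Ω] (P : Measure Ω) [IsProbabilityMeasure P]
    (Z : Ω → ℝ) (hZmeas : Measurable Z) (hZpos : ∀ ω, 0 ≤ Z ω)
    (Cstar : ℝ)
    (hyp : Tendsto (fun l : ℝ =>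
        (∫ ω, (1 - Real.exp (-l * Z ω)) ∂P) / (l * Real.log (1 / l)))
      (nhdsWithin 0 (Set.Ioi 0)) (nhds Cstar)) :
    Tendsto (fun l : ℝ =>
        (∫ ω, Z ω * Real.exp (-l * Z ω) ∂P) / Real.log (1 / l))
      (nhdsWithin 0 (Set.Ioi 0)) (nhds Cstar) :=
  tendsto_div_log_one_div_of_increment_bounds hyp fun _ _ hs hst =>
    laplace_increment_bounds hZmeas hZpos hs (hs.trans_le hst)

/-- If `E(1 - e^{-λZ}) = (C⋆ + o(1)) λ log(1/λ)` as `λ ↓ 0` for a nonnegative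
random variable `Z`, then `E(Z e^{-λZ}) = (C⋆ + o(1)) log(1/λ)` as `λ ↓ 0`. -/
theorem laplace_asymptotics_derivative
    {Ω : Type*} [MeasurableSpace Ω] (P : Measure Ω) [IsProbabilityMeasure P]
    (Z : Ω → ℝ) (hZmeas : Measurable Z) (hZpos : ∀ ω, 0 ≤ Z ω)
    (Cstar : ℝ) (hC : 0 < Cstar)
    (hyp : Tendsto (fun l : ℝ =>
        (∫ ω, (1 - Real.exp (-l * Z ω)) ∂P) / (l * Real.log (1 / l)))
      (nhdsWithin 0 (Set.Ioi 0)) (nhds Cstar)) :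
    Tendsto (fun l : ℝ =>
        (∫ ω, Z ω * Real.exp (-l * Z ω) ∂P) / Real.log (1 / l))
      (nhdsWithin 0 (Set.Ioi 0)) (nhds Cstar) :=
  laplace_asymptotics_derivative_general P Z hZmeas hZpos Cstar hyp
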